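/- There exists a map u : A₊ → G × G, measurable with respect to the σ-algebra 𝒜 generated by the analytic subsets of X, such that whenever u(x) = (γ¹,γ²): γ¹ and γ² are non-constant; (x, γ¹_s) ∈ Γ and (x, γ²_s) ∈ Γ for all s ∈ [0,1]; (γ¹_s, γ²_s) ∉ R for all s ∈ [0,1]; and φ(γ¹_s) = φ(γ²_s) for all s ∈ [0,1]. -/

import Mathlib

open Set MeasureTheory

variable {X : Type*}

/-- A geodesic parametrized on `[0,1]`. -/
def IsGeodesic [MetricSpace X] (γ : ℝ → X) : Prop :=
  ∀ s ∈ Set.Icc (0:ℝ) 1, ∀ t ∈ Set.Icc (0:ℝ) 1,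
    dist (γ s) (γ t) = |s - t| * dist (γ 0) (γ 1)

/-- `(X,d)` is a geodesic space. -/
def GeodesicSpace (X : Type*) [MetricSpace X] : Prop :=
  ∀ x y : X, ∃ γ : ℝ → X, IsGeodesic γ ∧ γ 0 = x ∧ γ 1 = y

/-- `Γ = {(x,y) : φ(x) - φ(y) = d(x,y)}`. -/
def Gamma [MetricSpace X] (φ : X → ℝ) : Set (X × X) :=
  {p | φ p.1 - φ p.2 = dist p.1 p.2}

/-- `Γ⁻¹`. -/
def GammaInv [MetricSpace X] (φ : X → ℝ) : Set (X × X) :=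
  {p | (p.2, p.1) ∈ Gamma φ}

/-- The set of transport rays `R = Γ ∪ Γ⁻¹`. -/
def Rays [MetricSpace X] (φ : X → ℝ) : Set (X × X) :=
  Gamma φ ∪ GammaInv φ

/-- `Γ(x)`. -/
def GammaOf [MetricSpace X] (φ : X → ℝ) (x : X) : Set X := {y | (x, y) ∈ Gamma φ}

/-- `Γ⁻¹(x)`. -/
def GammaInvOf [MetricSpace X] (φ : X → ℝ) (x : X) : Set X := {y | (x, y) ∈ GammaInv φ}

/-- `R(x) = Γ(x) ∪ Γ⁻¹(x)`. -/
def RayOf [MetricSpace X] (φ : X → ℝ) (x : X) : Set X := GammaOf φ x ∪ GammaInvOf φ x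

/-- The transport set with end points `𝒯_e`. -/
def Te [MetricSpace X] (φ : X → ℝ) : Set X :=
  (Prod.fst '' (Gamma φ \ {p : X × X | p.1 = p.2})) ∪
    (Prod.fst '' (GammaInv φ \ {p : X × X | p.1 = p.2}))

/-- The set of forward branching points `A₊`. -/
def Aplus [MetricSpace X] (φ : X → ℝ) : Set X :=
  {x | x ∈ Te φ ∧ ∃ z ∈ GammaOf φ x, ∃ w ∈ GammaOf φ x, (z, w) ∉ Rays φ}

/-- The set of backward branching points `A₋`. -/
def Aminus [MetricSpace X] (φ : X → ℝ) : Set X :=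
  {x | x ∈ Te φ ∧ ∃ z ∈ GammaInvOf φ x, ∃ w ∈ GammaInvOf φ x, (z, w) ∉ Rays φ}

/-- The transport set `𝒯 = 𝒯_e \ (A₊ ∪ A₋)`. -/
def Tset [MetricSpace X] (φ : X → ℝ) : Set X := Te φ \ (Aplus φ ∪ Aminus φ)

/-- A geodesic parametrized on the unit interval, as a continuous map. -/
def GeoC [MetricSpace X] (γ : C(unitInterval, X)) : Prop :=
  ∀ s t : unitInterval, dist (γ s) (γ t) = |(s : ℝ) - (t : ℝ)| * dist (γ 0) (γ 1)

section Geometry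

variable [MetricSpace X] {φ : X → ℝ}

lemma lip_sub (hφ : LipschitzWith 1 φ) (a b : X) : φ a - φ b ≤ dist a b := by
  have h := hφ.dist_le_mul a b
  rw [Real.dist_eq] at h; push_cast at h
  linarith [le_abs_self (φ a - φ b)]

/-- φ is affine along a geodesic whose endpoints are in Γ. -/
lemma geodesic_phi (hφ : LipschitzWith 1 φ) {γ : ℝ → X} (hγ : IsGeodesic γ)
    (h01 : (γ 0, γ 1) ∈ Gamma φ) {s : ℝ} (hs : s ∈ Set.Icc (0:ℝ) 1) :
    φ (γ s) = φ (γ 0) - s * dist (γ 0) (γ 1) := by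
  set D := dist (γ 0) (γ 1) with hD
  have h0 : (0:ℝ) ∈ Set.Icc (0:ℝ) 1 := ⟨le_refl _, zero_le_one⟩
  have h1 : (1:ℝ) ∈ Set.Icc (0:ℝ) 1 := ⟨zero_le_one, le_refl _⟩
  have e1 : dist (γ 0) (γ s) = s * D := by
    have := hγ 0 h0 s hs
    rwa [show |(0:ℝ) - s| = s by rw [abs_sub_comm]; simp [abs_of_nonneg hs.1]] at this
  have e2 : dist (γ s) (γ 1) = (1 - s) * D := by
    have := hγ s hs 1 h1
    rwa [show |s - 1| = 1 - s by rw [abs_sub_comm]; simp [abs_of_nonneg (by linarith [hs.2] : (0:ℝ) ≤ 1 - s)]] at this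
  have l1 : φ (γ 0) - φ (γ s) ≤ s * D := e1 ▸ lip_sub hφ _ _
  have l2 : φ (γ s) - φ (γ 1) ≤ (1 - s) * D := e2 ▸ lip_sub hφ _ _
  have hg : φ (γ 0) - φ (γ 1) = D := h01
  nlinarith [l1, l2, hg]

lemma geodesic_gamma_pair (hφ : LipschitzWith 1 φ) {γ : ℝ → X} (hγ : IsGeodesic γ)
    (h01 : (γ 0, γ 1) ∈ Gamma φ) {s t : ℝ} (hs : s ∈ Set.Icc (0:ℝ) 1)
    (ht : t ∈ Set.Icc (0:ℝ) 1) (hst : s ≤ t) :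
    (γ s, γ t) ∈ Gamma φ := by
  have e1 := geodesic_phi hφ hγ h01 hs
  have e2 := geodesic_phi hφ hγ h01 ht
  have e3 := hγ s hs t ht
  have habs : |s - t| = t - s := by rw [abs_sub_comm]; exact abs_of_nonneg (by linarith)
  show φ (γ s) - φ (γ t) = dist (γ s) (γ t)
  rw [e1, e2, e3, habs]; ring

end Geometry

section PairSet

variable [MetricSpace X]

/-- The set of admissible branching geodesic pairs emanating below `x`, with
quantitative bounds indexed by `n`. -/
def PairSet (φ : X → ℝ) (n : ℕ) (x : X) :
    Set (C(unitInterval, X) × C(unitInterval, X)) :=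
  {p | GeoC p.1 ∧ GeoC p.2 ∧
    (p.1 0, p.1 1) ∈ Gamma φ ∧ (p.2 0, p.2 1) ∈ Gamma φ ∧
    (∀ s : unitInterval, (x, p.1 s) ∈ Gamma φ ∧ (x, p.2 s) ∈ Gamma φ) ∧
    (∀ s : unitInterval, φ (p.1 s) = φ (p.2 s)) ∧
    (∀ s : unitInterval, ((n : ℝ) + 1)⁻¹ ≤ dist (p.1 s) (p.2 s)) ∧
    ((n : ℝ) + 1)⁻¹ ≤ dist (p.1 0) (p.1 1) ∧
    ((n : ℝ) + 1)⁻¹ ≤ dist (p.2 0) (p.2 1) ∧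
    dist (p.1 0) (p.1 1) ≤ (n : ℝ) + 1 ∧ dist (p.2 0) (p.2 1) ≤ (n : ℝ) + 1 ∧
    dist x (p.1 0) ≤ (n : ℝ) + 1 ∧ dist x (p.2 0) ≤ (n : ℝ) + 1}

variable {φ : X → ℝ}

set_option maxHeartbeats 2000000 in
lemma exists_pairSet_aux (hgeod : GeodesicSpace X) (hφ : LipschitzWith 1 φ)
    {x z w : X} (hz : (x, z) ∈ Gamma φ) (hw : (x, w) ∈ Gamma φ)
    (hzw : (z, w) ∉ Rays φ) (hab : dist x z ≤ dist x w) :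
    ∃ n, (PairSet φ n x).Nonempty := by
  classical
  set a := dist x z with ha_def
  set b := dist x w with hb_def
  have hza : z ≠ x := by
    rintro rfl; exact hzw (Or.inl hw)
  have hwa : w ≠ x := by
    rintro rfl; exact hzw (Or.inr (by exact hz))
  have ha : 0 < a := dist_pos.2 (Ne.symm hza)
  have hb : 0 < b := dist_pos.2 (Ne.symm hwa)
  obtain ⟨g, hg, hg0, hg1⟩ := hgeod x z
  obtain ⟨h, hh, hh0, hh1⟩ := hgeod x w
  have hgd : dist (g 0) (g 1) = a := by rw [hg0, hg1]
  have hhd : dist (h 0) (h 1) = b := by rw [hh0, hh1]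
  have hgΓ : (g 0, g 1) ∈ Gamma φ := by
    show φ (g 0) - φ (g 1) = dist (g 0) (g 1)
    rw [hg0, hg1]; exact hz
  have hhΓ : (h 0, h 1) ∈ Gamma φ := by
    show φ (h 0) - φ (h 1) = dist (h 0) (h 1)
    rw [hh0, hh1]; exact hw
  -- φ along the two geodesics
  have hφg : ∀ s ∈ Set.Icc (0:ℝ) 1, φ (g s) = φ x - s * a := by
    intro s hs
    have := geodesic_phi hφ hg hgΓ hs
    rwa [hgd, hg0] at this
  have hφh : ∀ s ∈ Set.Icc (0:ℝ) 1, φ (h s) = φ x - s * b := by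
    intro s hs
    have := geodesic_phi hφ hh hhΓ hs
    rwa [hhd, hh0] at this
  set c := a / b with hc_def
  have hc0 : 0 < c := div_pos ha hb
  have hc1 : c ≤ 1 := (div_le_one hb).2 hab
  have hcb : c * b = a := div_mul_cancel₀ a hb.ne'
  -- continuity of g and of t ↦ h (t * c) on [0,1]
  have hgcont : ContinuousOn g (Set.Icc 0 1) := by
    refine LipschitzOnWith.continuousOn (K := Real.toNNReal a) ?_
    refine LipschitzOnWith.of_dist_le_mul fun s hs t ht => ?_
    rw [hg s hs t ht, hgd, Real.coe_toNNReal a ha.le, Real.dist_eq]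
    rw [mul_comm]
  have hhcont : ContinuousOn h (Set.Icc 0 1) := by
    refine LipschitzOnWith.continuousOn (K := Real.toNNReal b) ?_
    refine LipschitzOnWith.of_dist_le_mul fun s hs t ht => ?_
    rw [hh s hs t ht, hhd, Real.coe_toNNReal b hb.le, Real.dist_eq]
    rw [mul_comm]
  have hmemc : ∀ t ∈ Set.Icc (0:ℝ) 1, t * c ∈ Set.Icc (0:ℝ) 1 := by
    intro t ht
    constructor
    · exact mul_nonneg ht.1 hc0.le
    · calc t * c ≤ 1 * 1 := mul_le_mul ht.2 hc1 hc0.le zero_le_one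
        _ = 1 := one_mul 1
  -- the coincidence set
  set E := {t : ℝ | t ∈ Set.Icc (0:ℝ) 1 ∧ g t = h (t * c)} with hE_def
  have hE0 : (0:ℝ) ∈ E := by
    refine ⟨⟨le_refl _, zero_le_one⟩, ?_⟩
    rw [zero_mul, hg0, hh0]
  have hEclosed : IsClosed E := by
    have : E = Set.Icc (0:ℝ) 1 ∩ (fun t => dist (g t) (h (t * c))) ⁻¹' {0} := by
      ext t
      simp only [hE_def, Set.mem_setOf_eq, Set.mem_inter_iff, Set.mem_preimage,
        Set.mem_singleton_iff, dist_eq_zero]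
    rw [this]
    refine ContinuousOn.preimage_isClosed_of_isClosed ?_ isClosed_Icc isClosed_singleton
    exact Continuous.comp_continuousOn (continuous_dist (α := X))
      (ContinuousOn.prodMk (hgcont.mono subset_rfl)
        (hhcont.comp (Continuous.continuousOn (continuous_id.mul continuous_const)) (fun t ht => hmemc t ht)))
  have hEbdd : BddAbove E := (bddAbove_Icc).mono (fun t ht => ht.1)
  set m := sSup E with hm_def
  have hmE : m ∈ E := hEclosed.csSup_mem ⟨0, hE0⟩ hEbdd
  have hm01 : m ∈ Set.Icc (0:ℝ) 1 := hmE.1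
  have hm1 : m < 1 := by
    rcases lt_or_eq_of_le hm01.2 with h' | h'
    · exact h'
    · exfalso
      have hgm : g 1 = h c := by
        have := hmE.2; rw [h', one_mul] at this; exact this
      have hzc : z = h c := by rw [← hg1, hgm]
      apply hzw
      left
      show φ z - φ w = dist z w
      have e1 : φ z = φ x - a := by
        have := hφg 1 ⟨zero_le_one, le_refl _⟩; rwa [hg1, one_mul] at this
      have e2 : φ w = φ x - b := by
        have := hφh 1 ⟨zero_le_one, le_refl _⟩; rwa [hh1, one_mul] at this
      have e3 : dist z w = (1 - c) * b := by
        rw [hzc, ← hh1]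
        have := hh c ⟨hc0.le, hc1⟩ 1 ⟨zero_le_one, le_refl _⟩
        rw [this, hhd]
        congr 1
        rw [abs_sub_comm]; exact abs_of_nonneg (by linarith)
      rw [e1, e2, e3, sub_mul, one_mul, hcb]; ring
  set t₀ := (m + 1) / 2 with ht₀_def
  have hmt₀ : m < t₀ := by rw [ht₀_def]; linarith
  have ht₀1 : t₀ < 1 := by rw [ht₀_def]; linarith
  have ht₀0 : 0 ≤ t₀ := by rw [ht₀_def]; linarith [hm01.1]
  have hsep : ∀ t ∈ Set.Icc t₀ 1, g t ≠ h (t * c) := by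
    intro t ht hEq
    have htE : t ∈ E := ⟨⟨le_trans ht₀0 ht.1, ht.2⟩, hEq⟩
    have : t ≤ m := le_csSup hEbdd htE
    linarith [ht.1]
  -- minimum separation on [t₀, 1]
  have hsub : Set.Icc t₀ 1 ⊆ Set.Icc (0:ℝ) 1 := fun t ht => ⟨le_trans ht₀0 ht.1, ht.2⟩
  have hdistcont : ContinuousOn (fun t => dist (g t) (h (t * c))) (Set.Icc t₀ 1) := by
    exact Continuous.comp_continuousOn (continuous_dist (α := X))
      (ContinuousOn.prodMk (hgcont.mono hsub)
        (((hhcont.comp (Continuous.continuousOn (continuous_id.mul continuous_const))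
          (fun t ht => hmemc t ht))).mono hsub))
  obtain ⟨tm, htm, hmin'⟩ := IsCompact.exists_isMinOn isCompact_Icc ⟨1, ⟨ht₀1.le, le_refl _⟩⟩ hdistcont
  have hmin : ∀ t ∈ Set.Icc t₀ 1, dist (g tm) (h (tm * c)) ≤ dist (g t) (h (t * c)) :=
    fun t ht => hmin' ht
  set δ := dist (g tm) (h (tm * c)) with hδ_def
  have hδ0 : 0 < δ := dist_pos.2 (hsep tm htm)
  set D := (1 - t₀) * a with hD_def
  have hD0 : 0 < D := mul_pos (by linarith) ha
  -- pick n
  obtain ⟨n, hn⟩ := exists_nat_ge (max (max δ⁻¹ D⁻¹) a)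
  have hn1 : (0:ℝ) < (n : ℝ) + 1 := by positivity
  have hinvδ : ((n : ℝ) + 1)⁻¹ ≤ δ := by
    rw [inv_le_comm₀ hn1 hδ0]
    calc δ⁻¹ ≤ max (max δ⁻¹ D⁻¹) a := le_max_of_le_left (le_max_left _ _)
      _ ≤ (n : ℝ) := hn
      _ ≤ (n : ℝ) + 1 := by linarith
  have hinvD : ((n : ℝ) + 1)⁻¹ ≤ D := by
    rw [inv_le_comm₀ hn1 hD0]
    calc D⁻¹ ≤ max (max δ⁻¹ D⁻¹) a := le_max_of_le_left (le_max_right _ _)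
      _ ≤ (n : ℝ) := hn
      _ ≤ (n : ℝ) + 1 := by linarith
  have han : a ≤ (n : ℝ) + 1 := by
    calc a ≤ max (max δ⁻¹ D⁻¹) a := le_max_right _ _
      _ ≤ (n : ℝ) := hn
      _ ≤ (n : ℝ) + 1 := by linarith
  -- the affine reparametrization
  set aff : unitInterval → ℝ := fun s => t₀ + (s : ℝ) * (1 - t₀) with haff_def
  have haffmem : ∀ s : unitInterval, aff s ∈ Set.Icc t₀ 1 := by
    intro s
    have e : aff s = t₀ + (s : ℝ) * (1 - t₀) := rfl
    rw [Set.mem_Icc, e]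
    constructor
    · nlinarith [s.2.1, s.2.2]
    · nlinarith [s.2.1, s.2.2]
  have haffmem01 : ∀ s : unitInterval, aff s ∈ Set.Icc (0:ℝ) 1 := fun s => hsub (haffmem s)
  have haffc : ∀ s : unitInterval, aff s * c ∈ Set.Icc (0:ℝ) 1 := fun s =>
    hmemc _ (haffmem01 s)
  have haffcont : Continuous aff := by
    apply Continuous.add continuous_const
    exact Continuous.mul continuous_subtype_val continuous_const
  set γ₁ : C(unitInterval, X) := ⟨fun s => g (aff s),
    hgcont.comp_continuous haffcont haffmem01⟩ with hγ₁_def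
  set γ₂ : C(unitInterval, X) := ⟨fun s => h (aff s * c),
    hhcont.comp_continuous (haffcont.mul continuous_const) haffc⟩ with hγ₂_def
  have hγ₁app : ∀ s : unitInterval, γ₁ s = g (aff s) := fun s => rfl
  have hγ₂app : ∀ s : unitInterval, γ₂ s = h (aff s * c) := fun s => rfl
  -- distances along γ₁ and γ₂
  have haffsub : ∀ s t : unitInterval, |aff s - aff t| = |(s:ℝ) - (t:ℝ)| * (1 - t₀) := by
    intro s t
    have e : aff s - aff t = ((s:ℝ) - (t:ℝ)) * (1 - t₀) := by
      show t₀ + (s:ℝ) * (1 - t₀) - (t₀ + (t:ℝ) * (1 - t₀)) = ((s:ℝ) - (t:ℝ)) * (1 - t₀)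
      ring
    rw [e, abs_mul, abs_of_nonneg (by linarith : (0:ℝ) ≤ 1 - t₀)]
  have hd₁ : ∀ s t : unitInterval, dist (γ₁ s) (γ₁ t) = |(s:ℝ) - (t:ℝ)| * D := by
    intro s t
    rw [hγ₁app, hγ₁app, hg _ (haffmem01 s) _ (haffmem01 t), hgd, haffsub, hD_def]
    ring
  have hd₂ : ∀ s t : unitInterval, dist (γ₂ s) (γ₂ t) = |(s:ℝ) - (t:ℝ)| * D := by
    intro s t
    rw [hγ₂app, hγ₂app, hh _ (haffc s) _ (haffc t), hhd]
    have e1 : |aff s * c - aff t * c| = |(s:ℝ) - (t:ℝ)| * (1 - t₀) * c := by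
      rw [← sub_mul, abs_mul, abs_of_nonneg hc0.le, haffsub s t]
    rw [e1, hD_def]
    linear_combination (|(s:ℝ) - (t:ℝ)| * (1 - t₀)) * hcb
  -- endpoints of aff
  have haff0 : aff (0 : unitInterval) = t₀ := by
    show t₀ + ((0 : unitInterval) : ℝ) * (1 - t₀) = t₀
    norm_num
  have haff1 : aff (1 : unitInterval) = 1 := by
    show t₀ + ((1 : unitInterval) : ℝ) * (1 - t₀) = 1
    norm_num
  have h01₁ : dist (γ₁ 0) (γ₁ 1) = D := by
    rw [hd₁ 0 1]; norm_num
  have h01₂ : dist (γ₂ 0) (γ₂ 1) = D := by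
    rw [hd₂ 0 1]; norm_num
  have hDa : D ≤ a := by
    rw [hD_def]; nlinarith [ht₀0, ha.le]
  have ht₀le1 : t₀ ≤ 1 := ht₀1.le
  refine ⟨n, ⟨(γ₁, γ₂), ?_, ?_, ?_, ?_, ?_, ?_, ?_, ?_, ?_, ?_, ?_, ?_, ?_⟩⟩
  · -- GeoC γ₁
    intro s t
    show dist (γ₁ s) (γ₁ t) = |(s:ℝ) - (t:ℝ)| * dist (γ₁ 0) (γ₁ 1)
    rw [hd₁ s t, h01₁]
  · intro s t
    show dist (γ₂ s) (γ₂ t) = |(s:ℝ) - (t:ℝ)| * dist (γ₂ 0) (γ₂ 1)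
    rw [hd₂ s t, h01₂]
  · -- endpoints in Γ
    show (g (aff 0), g (aff 1)) ∈ Gamma φ
    refine geodesic_gamma_pair hφ hg hgΓ (haffmem01 0) (haffmem01 1) ?_
    rw [haff0, haff1]; exact ht₀le1
  · show (h (aff 0 * c), h (aff 1 * c)) ∈ Gamma φ
    refine geodesic_gamma_pair hφ hh hhΓ (haffc 0) (haffc 1) ?_
    rw [haff0, haff1]
    exact mul_le_mul_of_nonneg_right ht₀le1 hc0.le
  · -- (x, γ s) ∈ Γ
    intro s
    constructor
    · have := geodesic_gamma_pair hφ hg hgΓ ⟨le_refl _, zero_le_one⟩ (haffmem01 s)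
        (haffmem01 s).1
      rwa [hg0] at this
    · have := geodesic_gamma_pair hφ hh hhΓ ⟨le_refl _, zero_le_one⟩ (haffc s)
        (haffc s).1
      rwa [hh0] at this
  · -- equal φ levels
    intro s
    show φ (g (aff s)) = φ (h (aff s * c))
    rw [hφg _ (haffmem01 s), hφh _ (haffc s)]
    linear_combination (aff s) * hcb
  · -- separation
    intro s
    calc ((n:ℝ) + 1)⁻¹ ≤ δ := hinvδ
      _ ≤ dist (g (aff s)) (h (aff s * c)) := hmin _ (haffmem s)
      _ = dist (γ₁ s) (γ₂ s) := rfl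
  · rw [h01₁]; exact hinvD
  · rw [h01₂]; exact hinvD
  · rw [h01₁]; exact le_trans hDa han
  · rw [h01₂]; exact le_trans hDa han
  · -- dist x (γ₁ 0)
    show dist x (g (aff 0)) ≤ (n:ℝ) + 1
    rw [← hg0, hg 0 ⟨le_refl _, zero_le_one⟩ _ (haffmem01 0), hgd, haff0]
    rw [show |(0:ℝ) - t₀| = t₀ by rw [abs_sub_comm, sub_zero]; exact abs_of_nonneg ht₀0]
    nlinarith [ht₀0, ha.le]
  · show dist x (h (aff 0 * c)) ≤ (n:ℝ) + 1
    rw [← hh0, hh 0 ⟨le_refl _, zero_le_one⟩ _ (haffc 0), hhd, haff0]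
    rw [show |(0:ℝ) - t₀ * c| = t₀ * c by
      rw [abs_sub_comm, sub_zero]; exact abs_of_nonneg (mul_nonneg ht₀0 hc0.le)]
    calc t₀ * c * b = t₀ * a := by linear_combination t₀ * hcb
      _ ≤ a := by nlinarith [ht₀0, ha.le]
      _ ≤ (n:ℝ) + 1 := han

/-- Every forward branching point admits an admissible pair. -/
lemma exists_pairSet (hgeod : GeodesicSpace X) (hφ : LipschitzWith 1 φ)
    {x : X} (hx : x ∈ Aplus φ) : ∃ n, (PairSet φ n x).Nonempty := by
  obtain ⟨-, z, hz, w, hw, hzw⟩ := hx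
  rcases le_total (dist x z) (dist x w) with hle | hle
  · exact exists_pairSet_aux hgeod hφ hz hw hzw hle
  · refine exists_pairSet_aux hgeod hφ hw hz ?_ hle
    intro hmem
    rcases hmem with hm | hm
    · exact hzw (Or.inr hm)
    · exact hzw (Or.inl hm)

end PairSet

section Topology

variable [MetricSpace X] {φ : X → ℝ}

lemma isClosed_gamma (hφc : Continuous φ) : IsClosed (Gamma φ) := by
  have : Gamma φ = {p : X × X | φ p.1 - φ p.2 = dist p.1 p.2} := rfl
  rw [this]
  exact isClosed_eq ((hφc.comp continuous_fst).sub (hφc.comp continuous_snd)) continuous_dist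

set_option maxHeartbeats 1000000 in
lemma isClosed_pairSetGraph (hφc : Continuous φ) (n : ℕ) :
    IsClosed {q : X × (C(unitInterval, X) × C(unitInterval, X)) | q.2 ∈ PairSet φ n q.1} := by
  have hΓ : IsClosed (Gamma φ) := isClosed_gamma hφc
  have hev1 : ∀ s : unitInterval,
      Continuous fun q : X × (C(unitInterval, X) × C(unitInterval, X)) => q.2.1 s := fun s =>
    (continuous_eval_const s).comp (continuous_fst.comp continuous_snd)
  have hev2 : ∀ s : unitInterval,
      Continuous fun q : X × (C(unitInterval, X) × C(unitInterval, X)) => q.2.2 s := fun s =>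
    (continuous_eval_const s).comp (continuous_snd.comp continuous_snd)
  have hrw : {q : X × (C(unitInterval, X) × C(unitInterval, X)) | q.2 ∈ PairSet φ n q.1} =
      (⋂ s : unitInterval, ⋂ t : unitInterval,
        {q : X × (C(unitInterval, X) × C(unitInterval, X)) |
          dist (q.2.1 s) (q.2.1 t) = |(s:ℝ) - (t:ℝ)| * dist (q.2.1 0) (q.2.1 1)}) ∩
      ((⋂ s : unitInterval, ⋂ t : unitInterval,
        {q : X × (C(unitInterval, X) × C(unitInterval, X)) |
          dist (q.2.2 s) (q.2.2 t) = |(s:ℝ) - (t:ℝ)| * dist (q.2.2 0) (q.2.2 1)}) ∩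
      ({q : X × (C(unitInterval, X) × C(unitInterval, X)) | (q.2.1 0, q.2.1 1) ∈ Gamma φ} ∩
      ({q : X × (C(unitInterval, X) × C(unitInterval, X)) | (q.2.2 0, q.2.2 1) ∈ Gamma φ} ∩
      ((⋂ s : unitInterval,
        {q : X × (C(unitInterval, X) × C(unitInterval, X)) | (q.1, q.2.1 s) ∈ Gamma φ}) ∩
      ((⋂ s : unitInterval,
        {q : X × (C(unitInterval, X) × C(unitInterval, X)) | (q.1, q.2.2 s) ∈ Gamma φ}) ∩
      ((⋂ s : unitInterval,
        {q : X × (C(unitInterval, X) × C(unitInterval, X)) | φ (q.2.1 s) = φ (q.2.2 s)}) ∩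
      ((⋂ s : unitInterval,
        {q : X × (C(unitInterval, X) × C(unitInterval, X)) |
          ((n:ℝ) + 1)⁻¹ ≤ dist (q.2.1 s) (q.2.2 s)}) ∩
      ({q : X × (C(unitInterval, X) × C(unitInterval, X)) |
          ((n:ℝ) + 1)⁻¹ ≤ dist (q.2.1 0) (q.2.1 1)} ∩
      ({q : X × (C(unitInterval, X) × C(unitInterval, X)) |
          ((n:ℝ) + 1)⁻¹ ≤ dist (q.2.2 0) (q.2.2 1)} ∩
      ({q : X × (C(unitInterval, X) × C(unitInterval, X)) |
          dist (q.2.1 0) (q.2.1 1) ≤ (n:ℝ) + 1} ∩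
      ({q : X × (C(unitInterval, X) × C(unitInterval, X)) |
          dist (q.2.2 0) (q.2.2 1) ≤ (n:ℝ) + 1} ∩
      ({q : X × (C(unitInterval, X) × C(unitInterval, X)) |
          dist q.1 (q.2.1 0) ≤ (n:ℝ) + 1} ∩
      {q : X × (C(unitInterval, X) × C(unitInterval, X)) |
          dist q.1 (q.2.2 0) ≤ (n:ℝ) + 1})))))))))))) := by
    ext q
    simp only [PairSet, GeoC, Set.mem_setOf_eq, Set.mem_inter_iff, Set.mem_iInter, forall_and]
    tauto
  rw [hrw]
  refine IsClosed.inter ?_ (IsClosed.inter ?_ (IsClosed.inter ?_ (IsClosed.inter ?_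
    (IsClosed.inter ?_ (IsClosed.inter ?_ (IsClosed.inter ?_ (IsClosed.inter ?_
    (IsClosed.inter ?_ (IsClosed.inter ?_ (IsClosed.inter ?_ (IsClosed.inter ?_ (IsClosed.inter ?_ ?_))))))))))))
  · exact isClosed_iInter fun s => isClosed_iInter fun t =>
      isClosed_eq ((hev1 s).dist (hev1 t)) (continuous_const.mul ((hev1 0).dist (hev1 1)))
  · exact isClosed_iInter fun s => isClosed_iInter fun t =>
      isClosed_eq ((hev2 s).dist (hev2 t)) (continuous_const.mul ((hev2 0).dist (hev2 1)))
  · exact hΓ.preimage ((hev1 0).prodMk (hev1 1))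
  · exact hΓ.preimage ((hev2 0).prodMk (hev2 1))
  · exact isClosed_iInter fun s => hΓ.preimage (continuous_fst.prodMk (hev1 s))
  · exact isClosed_iInter fun s => hΓ.preimage (continuous_fst.prodMk (hev2 s))
  · exact isClosed_iInter fun s => isClosed_eq (hφc.comp (hev1 s)) (hφc.comp (hev2 s))
  · exact isClosed_iInter fun s =>
      isClosed_le continuous_const ((hev1 s).dist (hev2 s))
  · exact isClosed_le continuous_const ((hev1 0).dist (hev1 1))
  · exact isClosed_le continuous_const ((hev2 0).dist (hev2 1))
  · exact isClosed_le ((hev1 0).dist (hev1 1)) continuous_const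
  · exact isClosed_le ((hev2 0).dist (hev2 1)) continuous_const
  · exact isClosed_le (continuous_fst.dist (hev1 0)) continuous_const
  · exact isClosed_le (continuous_fst.dist (hev2 0)) continuous_const

lemma isClosed_pairSet (hφc : Continuous φ) (n : ℕ) (x : X) :
    IsClosed (PairSet φ n x) := by
  have h : IsClosed ((fun p : C(unitInterval, X) × C(unitInterval, X) => (x, p)) ⁻¹'
      {q : X × (C(unitInterval, X) × C(unitInterval, X)) | q.2 ∈ PairSet φ n q.1}) :=
    (isClosed_pairSetGraph hφc n).preimage (Continuous.prodMk_right x)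
  simpa [Set.preimage_setOf_eq, Set.setOf_mem_eq] using h

/-- The set of `L`-Lipschitz curves starting in a ball. -/
def LipBall (L : NNReal) (x₀ : X) (r : ℝ) : Set C(unitInterval, X) :=
  {γ | LipschitzWith L γ ∧ dist (γ 0) x₀ ≤ r}

lemma dist_le_one_unitInterval (s t : unitInterval) : dist s t ≤ 1 := by
  rw [Subtype.dist_eq, Real.dist_eq, abs_sub_le_iff]
  constructor
  · have := s.2.2; have := t.2.1; linarith
  · have := t.2.2; have := s.2.1; linarith

lemma isCompact_lipBall [ProperSpace X] (L : NNReal) (x₀ : X) (r : ℝ) :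
    IsCompact (LipBall (X := X) L x₀ r) := by
  refine ArzelaAscoli.isCompact_of_equicontinuous _ ?_ ?_
  · -- compactness of images in the product topology
    have himeq : ContinuousMap.toFun '' (LipBall (X := X) L x₀ r) =
        {f : unitInterval → X | (∀ s t, dist (f s) (f t) ≤ (L : ℝ) * dist s t) ∧
          dist (f 0) x₀ ≤ r} := by
      ext f
      constructor
      · rintro ⟨γ, ⟨hl, hb⟩, rfl⟩
        exact ⟨fun s t => hl.dist_le_mul s t, hb⟩
      · rintro ⟨hl, hb⟩
        have hl' : LipschitzWith L f := LipschitzWith.of_dist_le_mul hl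
        exact ⟨⟨f, hl'.continuous⟩, ⟨hl', hb⟩, rfl⟩
    rw [himeq]
    have hclosed : IsClosed {f : unitInterval → X |
        (∀ s t, dist (f s) (f t) ≤ (L : ℝ) * dist s t) ∧ dist (f 0) x₀ ≤ r} := by
      simp only [Set.setOf_and, Set.setOf_forall]
      refine IsClosed.inter (isClosed_iInter fun s => isClosed_iInter fun t => ?_) ?_
      · exact isClosed_le ((continuous_apply s).dist (continuous_apply t)) continuous_const
      · exact isClosed_le ((continuous_apply 0).dist continuous_const) continuous_const
    have hsub : {f : unitInterval → X |
        (∀ s t, dist (f s) (f t) ≤ (L : ℝ) * dist s t) ∧ dist (f 0) x₀ ≤ r} ⊆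
        Set.pi Set.univ (fun _ : unitInterval => Metric.closedBall x₀ (r + L)) := by
      rintro f ⟨hl, hb⟩ s -
      have h1 : dist (f s) (f 0) ≤ (L : ℝ) * dist s 0 := hl s 0
      have h2 : (L : ℝ) * dist s 0 ≤ (L : ℝ) * 1 :=
        mul_le_mul_of_nonneg_left (dist_le_one_unitInterval s 0) L.coe_nonneg
      have : dist (f s) x₀ ≤ dist (f s) (f 0) + dist (f 0) x₀ := dist_triangle _ _ _
      simp only [Metric.mem_closedBall]
      linarith
    exact IsCompact.of_isClosed_subset
      (isCompact_univ_pi fun _ => isCompact_closedBall x₀ (r + L)) hclosed hsub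
  · -- equicontinuity
    refine Metric.equicontinuous_of_continuity_modulus (fun t => (L : ℝ) * t) ?_ _ ?_
    · have : Continuous fun t : ℝ => (L : ℝ) * t := continuous_const.mul continuous_id
      have h0 : ((L : ℝ) * 0 : ℝ) = 0 := by ring
      simpa [h0] using this.tendsto 0
    · rintro s t ⟨γ, hγ⟩
      exact hγ.1.dist_le_mul s t

lemma pairSet_subset (n : ℕ) (x : X) :
    PairSet φ n x ⊆ (LipBall (X := X) ((n : NNReal) + 1) x ((n : ℝ) + 1)) ×ˢ
      (LipBall (X := X) ((n : NNReal) + 1) x ((n : ℝ) + 1)) := by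
  rintro p ⟨hg1, hg2, -, -, -, -, -, -, -, hle1, hle2, hx1, hx2⟩
  have hcoe : (((n : NNReal) + 1 : NNReal) : ℝ) = (n : ℝ) + 1 := by push_cast; ring
  constructor
  · refine ⟨LipschitzWith.of_dist_le_mul fun s t => ?_, by rwa [dist_comm]⟩
    rw [hg1 s t, hcoe, Subtype.dist_eq, Real.dist_eq]
    calc |(s:ℝ) - (t:ℝ)| * dist (p.1 0) (p.1 1) ≤ |(s:ℝ) - (t:ℝ)| * ((n:ℝ) + 1) :=
          mul_le_mul_of_nonneg_left hle1 (abs_nonneg _)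
      _ = ((n:ℝ) + 1) * |(s:ℝ) - (t:ℝ)| := by ring
  · refine ⟨LipschitzWith.of_dist_le_mul fun s t => ?_, by rwa [dist_comm]⟩
    rw [hg2 s t, hcoe, Subtype.dist_eq, Real.dist_eq]
    calc |(s:ℝ) - (t:ℝ)| * dist (p.2 0) (p.2 1) ≤ |(s:ℝ) - (t:ℝ)| * ((n:ℝ) + 1) :=
          mul_le_mul_of_nonneg_left hle2 (abs_nonneg _)
      _ = ((n:ℝ) + 1) * |(s:ℝ) - (t:ℝ)| := by ring

lemma lipBall_mono_center {L : NNReal} {x y : X} {r : ℝ} (h : dist x y ≤ 1) :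
    LipBall (X := X) L x r ⊆ LipBall (X := X) L y (r + 1) := by
  rintro γ ⟨hl, hb⟩
  exact ⟨hl, le_trans (dist_triangle _ x y) (by linarith)⟩

set_option maxHeartbeats 1000000 in
lemma isClosed_pairHit [ProperSpace X] (hφc : Continuous φ) (n : ℕ)
    (C : Set (C(unitInterval, X) × C(unitInterval, X))) (hC : IsClosed C) :
    IsClosed {x : X | (PairSet φ n x ∩ C).Nonempty} := by
  refine IsSeqClosed.isClosed ?_
  intro u x hu hx
  choose p hp hpC using hu
  obtain ⟨J, hJ⟩ := Metric.tendsto_atTop.1 hx 1 one_pos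
  set K := (LipBall (X := X) ((n : NNReal) + 1) x ((n : ℝ) + 2)) ×ˢ
    (LipBall (X := X) ((n : NNReal) + 1) x ((n : ℝ) + 2)) with hK_def
  have hKcomp : IsCompact K :=
    (isCompact_lipBall _ _ _).prod (isCompact_lipBall _ _ _)
  have hqK : ∀ j : ℕ, p (j + J) ∈ K := by
    intro j
    have hd : dist (u (j + J)) x ≤ 1 := (hJ (j + J) (Nat.le_add_left J j)).le
    have := pairSet_subset n (u (j + J)) (hp (j + J))
    have h1 := (lipBall_mono_center (X := X) hd) this.1
    have h2 := (lipBall_mono_center (X := X) hd) this.2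
    rw [show (n : ℝ) + 1 + 1 = (n : ℝ) + 2 by ring] at h1 h2
    exact ⟨h1, h2⟩
  obtain ⟨q₀, hq₀K, ψ, hψ, hconv⟩ := hKcomp.tendsto_subseq hqK
  have hψJ : Filter.Tendsto (fun j => ψ j + J) Filter.atTop Filter.atTop :=
    (Filter.tendsto_add_atTop_nat J).comp hψ.tendsto_atTop
  have huconv : Filter.Tendsto (fun j => u (ψ j + J)) Filter.atTop (nhds x) :=
    hx.comp hψJ
  have hpair : Filter.Tendsto (fun j => (u (ψ j + J), p (ψ j + J))) Filter.atTop
      (nhds (x, q₀)) := huconv.prodMk_nhds hconv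
  have hmemgraph : (x, q₀) ∈
      {q : X × (C(unitInterval, X) × C(unitInterval, X)) | q.2 ∈ PairSet φ n q.1} := by
    refine (isClosed_pairSetGraph hφc n).mem_of_tendsto hpair ?_
    exact Filter.Eventually.of_forall fun j => hp (ψ j + J)
  have hq₀C : q₀ ∈ C := by
    refine hC.mem_of_tendsto hconv ?_
    exact Filter.Eventually.of_forall fun j => hpC (ψ j + J)
  exact ⟨q₀, hmemgraph, hq₀C⟩

end Topology

section KRN

open Filter Metric

variable {α β : Type*} [MetricSpace β]

open Classical in
noncomputable def leastHit (e : ℕ → β) (D : Set β) (r : ℝ) : ℕ :=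
  if h : ∃ i, (D ∩ Metric.closedBall (e i) r).Nonempty then Nat.find h else 0

open Classical in
lemma leastHit_spec {e : ℕ → β} {D : Set β} {r : ℝ}
    (h : ∃ i, (D ∩ Metric.closedBall (e i) r).Nonempty) :
    (D ∩ Metric.closedBall (e (leastHit e D r)) r).Nonempty := by
  rw [leastHit, dif_pos h]
  exact Nat.find_spec h

open Classical in
lemma leastHit_eq_iff {e : ℕ → β} {D : Set β} {r : ℝ}
    (h : ∃ i, (D ∩ Metric.closedBall (e i) r).Nonempty) {i : ℕ} :
    leastHit e D r = i ↔ ((D ∩ Metric.closedBall (e i) r).Nonempty ∧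
      ∀ j < i, ¬ (D ∩ Metric.closedBall (e j) r).Nonempty) := by
  rw [leastHit, dif_pos h, Nat.find_eq_iff]

/-- The nested approximation scheme. -/
noncomputable def krnAux (e : ℕ → β) (F : α → Set β) (x : α) : ℕ → Set β × ℕ
  | 0 => (F x, leastHit e (F x) 1)
  | (k+1) =>
    let D := (krnAux e F x k).1 ∩
      Metric.closedBall (e ((krnAux e F x k).2)) ((1/2 : ℝ)^k)
    (D, leastHit e D ((1/2 : ℝ)^(k+1)))

variable {e : ℕ → β} {F : α → Set β}

lemma krnAux_fst_succ (x : α) (k : ℕ) :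
    (krnAux e F x (k+1)).1 = (krnAux e F x k).1 ∩
      Metric.closedBall (e ((krnAux e F x k).2)) ((1/2 : ℝ)^k) := rfl

lemma krnAux_snd (x : α) (k : ℕ) :
    (krnAux e F x k).2 = leastHit e (krnAux e F x k).1 ((1/2 : ℝ)^k) := by
  cases k with
  | zero => simp [krnAux]
  | succ k => rfl

section Spec

variable (hne : ∀ x, (F x).Nonempty)
  (hdense : ∀ x, ∀ y ∈ F x, ∀ ε : ℝ, 0 < ε → ∃ i, dist y (e i) < ε)

include hne hdense in
lemma krnAux_spec (x : α) : ∀ k : ℕ,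
    (krnAux e F x k).1 ⊆ F x ∧
    (∃ i, ((krnAux e F x k).1 ∩ Metric.closedBall (e i) ((1/2 : ℝ)^k)).Nonempty) := by
  have step : ∀ (D : Set β) (k : ℕ), D ⊆ F x → D.Nonempty →
      ∃ i, (D ∩ Metric.closedBall (e i) ((1/2 : ℝ)^k)).Nonempty := by
    intro D k hDF ⟨y, hy⟩
    obtain ⟨i, hi⟩ := hdense x y (hDF hy) ((1/2 : ℝ)^k) (by positivity)
    exact ⟨i, ⟨y, hy, Metric.mem_closedBall.2 hi.le⟩⟩
  intro k
  induction k with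
  | zero =>
    refine ⟨subset_rfl, ?_⟩
    simpa [krnAux] using step (F x) 0 subset_rfl (hne x)
  | succ k ih =>
    have hnonempty : (krnAux e F x (k+1)).1.Nonempty := by
      rw [krnAux_fst_succ, krnAux_snd]
      exact leastHit_spec ih.2
    have hsub : (krnAux e F x (k+1)).1 ⊆ F x := by
      rw [krnAux_fst_succ]
      exact subset_trans Set.inter_subset_left ih.1
    exact ⟨hsub, step _ (k+1) hsub hnonempty⟩

include hne hdense in
lemma krnAux_dist (x : α) (k : ℕ) :
    dist (e ((krnAux e F x k).2)) (e ((krnAux e F x (k+1)).2)) ≤ (3/2) * (1/2 : ℝ)^k := by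
  have hspec := (krnAux_spec hne hdense x (k+1)).2
  have h1 : ((krnAux e F x (k+1)).1 ∩
      Metric.closedBall (e ((krnAux e F x (k+1)).2)) ((1/2 : ℝ)^(k+1))).Nonempty := by
    rw [krnAux_snd]
    exact leastHit_spec hspec
  obtain ⟨q, hq1, hq2⟩ := h1
  rw [krnAux_fst_succ] at hq1
  have hd1 : dist q (e ((krnAux e F x k).2)) ≤ (1/2 : ℝ)^k := Metric.mem_closedBall.1 hq1.2
  have hd2 : dist q (e ((krnAux e F x (k+1)).2)) ≤ (1/2 : ℝ)^(k+1) := Metric.mem_closedBall.1 hq2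
  have htri := dist_triangle (e ((krnAux e F x k).2)) q (e ((krnAux e F x (k+1)).2))
  rw [dist_comm (e ((krnAux e F x k).2)) q] at htri
  have : ((1/2 : ℝ))^(k+1) = (1/2) * (1/2)^k := by ring
  nlinarith [dist_nonneg (x := q) (y := e ((krnAux e F x k).2))]

include hne hdense in
lemma krnAux_cauchy (x : α) : CauchySeq (fun k => e ((krnAux e F x k).2)) := by
  refine cauchySeq_of_le_geometric (1/2) (3/2) (by norm_num) ?_
  intro k
  exact krnAux_dist hne hdense x k

end Spec

/-- Kuratowski–Ryll-Nardzewski-style measurable selection. -/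
theorem krn_selection [MeasurableSpace α] [CompleteSpace β]
    [MeasurableSpace β] [BorelSpace β]
    (F : α → Set β) (e : ℕ → β)
    (hne : ∀ x, (F x).Nonempty) (hcl : ∀ x, IsClosed (F x))
    (hdense : ∀ x, ∀ y ∈ F x, ∀ ε : ℝ, 0 < ε → ∃ i, dist y (e i) < ε)
    (hmeas : ∀ C : Set β, IsClosed C → MeasurableSet {x | (F x ∩ C).Nonempty}) :
    ∃ f : α → β, Measurable f ∧ ∀ x, f x ∈ F x := by
  classical
  set idx : α → ℕ → ℕ := fun x k => (krnAux e F x k).2 with hidx_def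
  set y : α → ℕ → β := fun x k => e (idx x k) with hy_def
  -- limits
  have hcauchy : ∀ x, CauchySeq (y x) := fun x => krnAux_cauchy hne hdense x
  choose f hf using fun x => cauchySeq_tendsto_of_complete (hcauchy x)
  -- membership in F x
  have hmem : ∀ x, f x ∈ F x := by
    intro x
    -- pick points q k in the nested sets
    have hq : ∀ k : ℕ, ∃ q, q ∈ F x ∧ dist q (y x k) ≤ (1/2 : ℝ)^k := by
      intro k
      have hspec := (krnAux_spec hne hdense x k).2
      have h1 : ((krnAux e F x k).1 ∩
          Metric.closedBall (e ((krnAux e F x k).2)) ((1/2 : ℝ)^k)).Nonempty := by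
        rw [krnAux_snd]
        exact leastHit_spec hspec
      obtain ⟨q, hq1, hq2⟩ := h1
      exact ⟨q, (krnAux_spec hne hdense x k).1 hq1, Metric.mem_closedBall.1 hq2⟩
    choose q hqF hqd using hq
    have hqtendsto : Tendsto q atTop (nhds (f x)) := by
      have hdq : Tendsto (fun k => dist (q k) (y x k)) atTop (nhds 0) := by
        refine squeeze_zero (fun k => dist_nonneg) hqd ?_
        exact tendsto_pow_atTop_nhds_zero_of_lt_one (by norm_num) (by norm_num)
      exact Filter.Tendsto.congr_dist (hf x) (by simpa [dist_comm] using hdq)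
    exact (hcl x).mem_of_tendsto hqtendsto (Filter.Eventually.of_forall hqF)
  -- structure of the nested sets
  have hstruct : ∀ x k, (krnAux e F x (k+1)).1 =
      F x ∩ ⋂ j, ⋂ (_ : j ≤ k), Metric.closedBall (e (idx x j)) ((1/2 : ℝ)^j) := by
    intro x k
    induction k with
    | zero =>
      rw [krnAux_fst_succ]
      ext p
      simp [Nat.le_zero, krnAux, hidx_def]
    | succ k ih =>
      rw [krnAux_fst_succ, ih]
      ext p
      simp only [Set.mem_inter_iff, Set.mem_iInter]
      constructor
      · rintro ⟨⟨hF, hball⟩, hlast⟩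
        refine ⟨hF, fun j hj => ?_⟩
        rcases Nat.le_succ_iff.1 hj with hj' | hj'
        · exact hball j hj'
        · subst hj'; exact hlast
      · rintro ⟨hF, hball⟩
        exact ⟨⟨hF, fun j hj => hball j (le_trans hj (Nat.le_succ k))⟩,
          hball (k+1) (le_refl _)⟩
  -- the existence hypotheses for leastHit at each stage
  have hex : ∀ x k, ∃ i, ((krnAux e F x k).1 ∩
      Metric.closedBall (e i) ((1/2 : ℝ)^k)).Nonempty :=
    fun x k => (krnAux_spec hne hdense x k).2
  -- measurability of finite histories
  have hhist : ∀ k (v : ℕ → ℕ), MeasurableSet {x | ∀ j ≤ k, idx x j = v j} := by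
    intro k
    induction k with
    | zero =>
      intro v
      have heq : {x | ∀ j ≤ 0, idx x j = v j} = {x | idx x 0 = v 0} := by
        ext x; simp [Nat.le_zero]
      rw [heq]
      have heq2 : {x | idx x 0 = v 0} =
          {x | (F x ∩ Metric.closedBall (e (v 0)) 1).Nonempty} ∩
          (⋂ j ∈ Finset.range (v 0),
            {x | (F x ∩ Metric.closedBall (e j) 1).Nonempty}ᶜ) := by
        ext x
        have h0 : idx x 0 = leastHit e (F x) 1 := rfl
        have hex0 : ∃ i, (F x ∩ Metric.closedBall (e i) 1).Nonempty := by
          simpa [krnAux] using hex x 0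
        simp only [Set.mem_setOf_eq, h0, Set.mem_inter_iff, Set.mem_iInter,
          Set.mem_compl_iff, Finset.mem_range]
        rw [leastHit_eq_iff (by simpa using hex0)]
      rw [heq2]
      refine MeasurableSet.inter (hmeas _ Metric.isClosed_closedBall) ?_
      exact MeasurableSet.biInter (Set.to_countable _)
        (fun j _ => (hmeas _ Metric.isClosed_closedBall).compl)
    | succ k ih =>
      intro v
      -- the closed set determined by the history
      set Cv : Set β := ⋂ j, ⋂ (_ : j ≤ k), Metric.closedBall (e (v j)) ((1/2 : ℝ)^j)
        with hCv_def
      have hCvclosed : IsClosed Cv :=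
        isClosed_iInter fun j => isClosed_iInter fun _ => Metric.isClosed_closedBall
      have key : {x | ∀ j ≤ k + 1, idx x j = v j} =
          {x | ∀ j ≤ k, idx x j = v j} ∩
          ({x | (F x ∩ (Cv ∩ Metric.closedBall (e (v (k+1))) ((1/2 : ℝ)^(k+1)))).Nonempty} ∩
           (⋂ i ∈ Finset.range (v (k+1)),
             {x | (F x ∩ (Cv ∩ Metric.closedBall (e i) ((1/2 : ℝ)^(k+1)))).Nonempty}ᶜ)) := by
        ext x
        simp only [Set.mem_setOf_eq, Set.mem_inter_iff, Set.mem_iInter,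
          Set.mem_compl_iff, Finset.mem_range]
        constructor
        · intro hall
          have hhist' : ∀ j ≤ k, idx x j = v j := fun j hj => hall j (le_trans hj (Nat.le_succ k))
          have hD : (krnAux e F x (k+1)).1 = F x ∩ Cv := by
            rw [hstruct x k, hCv_def]
            congr 1
            apply Set.iInter_congr
            intro j
            ext p
            simp only [Set.mem_iInter]
            constructor
            · intro h hj; rw [← hhist' j hj]; exact h hj
            · intro h hj; rw [hhist' j hj]; exact h hj
          have hlast : idx x (k+1) = v (k+1) := hall (k+1) (le_refl _)
          have hsnd : idx x (k+1) = leastHit e (krnAux e F x (k+1)).1 ((1/2 : ℝ)^(k+1)) :=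
            krnAux_snd x (k+1)
          have hfind := (leastHit_eq_iff (hex x (k+1)) (i := v (k+1))).1 (by rw [← hsnd]; exact hlast)
          refine ⟨hhist', ?_, ?_⟩
          · have h1 := hfind.1
            rwa [hD, Set.inter_assoc] at h1
          · intro i hi
            have h2 := hfind.2 i hi
            rwa [hD, Set.inter_assoc] at h2
        · rintro ⟨hhist', hpos, hneg⟩
          have hD : (krnAux e F x (k+1)).1 = F x ∩ Cv := by
            rw [hstruct x k, hCv_def]
            congr 1
            apply Set.iInter_congr
            intro j
            ext p
            simp only [Set.mem_iInter]
            constructor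
            · intro h hj; rw [← hhist' j hj]; exact h hj
            · intro h hj; rw [hhist' j hj]; exact h hj
          intro j hj
          rcases Nat.le_succ_iff.1 hj with hj' | hj'
          · exact hhist' j hj'
          · subst hj'
            have : idx x (k+1) = leastHit e (krnAux e F x (k+1)).1 ((1/2 : ℝ)^(k+1)) :=
              krnAux_snd x (k+1)
            rw [this]
            rw [leastHit_eq_iff (hex x (k+1))]
            constructor
            · rw [hD, Set.inter_assoc]; exact hpos
            · intro i hi
              rw [hD, Set.inter_assoc]; exact hneg i hi
      rw [key]
      refine MeasurableSet.inter (ih v) (MeasurableSet.inter ?_ ?_)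
      · exact hmeas _ (hCvclosed.inter Metric.isClosed_closedBall)
      · exact MeasurableSet.biInter (Set.to_countable _) fun i _ =>
          (hmeas _ (hCvclosed.inter Metric.isClosed_closedBall)).compl
  -- measurability of each idx and of y
  have hidxmeas : ∀ k, Measurable fun x => idx x k := by
    intro k
    apply measurable_to_nat
    intro x₀
    have heq : (fun x => idx x k) ⁻¹' {idx x₀ k} =
        ⋃ (w : {w : Fin (k+1) → ℕ // w ⟨k, Nat.lt_succ_self k⟩ = idx x₀ k}),
          {x | ∀ j ≤ k, idx x j = (fun j' => if h : j' < k + 1 then w.1 ⟨j', h⟩ else 0) j} := by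
      ext x
      simp only [Set.mem_preimage, Set.mem_singleton_iff, Set.mem_iUnion, Set.mem_setOf_eq]
      constructor
      · intro hxk
        refine ⟨⟨fun j => idx x j.1, by simpa using hxk⟩, ?_⟩
        intro j hj
        rw [dif_pos (Nat.lt_succ_of_le hj)]
      · rintro ⟨w, hw⟩
        have h1 := hw k (le_refl k)
        rw [dif_pos (Nat.lt_succ_self k)] at h1
        rw [h1, w.2]
    rw [heq]
    exact MeasurableSet.iUnion fun w => hhist k _
  have hymeas : ∀ k, Measurable fun x => y x k := by
    intro k
    exact (measurable_from_top (f := e)).comp (hidxmeas k)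
  refine ⟨f, ?_, hmem⟩
  exact measurable_of_tendsto_metrizable hymeas (tendsto_pi_nhds.2 hf)

end KRN

section Main

open TopologicalSpace

set_option maxHeartbeats 1000000 in
theorem stmt7 [MetricSpace X]
    (hproper : ProperSpace X) (hgeod : GeodesicSpace X)
    (φ : X → ℝ) (hφ : LipschitzWith 1 φ) :
    ∃ u : X → C(unitInterval, X) × C(unitInterval, X),
      @Measurable X (C(unitInterval, X) × C(unitInterval, X))
        (MeasurableSpace.generateFrom {s : Set X | MeasureTheory.AnalyticSet s})
        (borel (C(unitInterval, X) × C(unitInterval, X))) u ∧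
      ∀ x ∈ Aplus φ,
        GeoC (u x).1 ∧ GeoC (u x).2 ∧
        ((u x).1 0, (u x).1 1) ∈ Gamma φ ∧ ((u x).2 0, (u x).2 1) ∈ Gamma φ ∧
        (u x).1 0 ≠ (u x).1 1 ∧ (u x).2 0 ≠ (u x).2 1 ∧
        (∀ s : unitInterval, (x, (u x).1 s) ∈ Gamma φ ∧ (x, (u x).2 s) ∈ Gamma φ) ∧
        (∀ s : unitInterval, ((u x).1 s, (u x).2 s) ∉ Rays φ) ∧
        (∀ s : unitInterval, φ ((u x).1 s) = φ ((u x).2 s)) := by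
  classical
  haveI := hproper
  rcases isEmpty_or_nonempty X with hXe | hXne
  · refine ⟨fun x => hXe.elim x, ?_, fun x _ => hXe.elim x⟩
    intro t _
    have : (fun x : X => hXe.elim x) ⁻¹' t = (∅ : Set X) := Set.eq_empty_of_isEmpty _
    rw [this]
    exact @MeasurableSet.empty X (MeasurableSpace.generateFrom {s | AnalyticSet s})
  · have hφc : Continuous φ := hφ.continuous
    haveI : PolishSpace X := inferInstance
    letI : MeasurableSpace (C(unitInterval, X) × C(unitInterval, X)) :=
      borel (C(unitInterval, X) × C(unitInterval, X))
    haveI : BorelSpace (C(unitInterval, X) × C(unitInterval, X)) := ⟨rfl⟩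
    letI mX : MeasurableSpace X := MeasurableSpace.generateFrom {s | AnalyticSet s}
    have hclosed_meas : ∀ s : Set X, IsClosed s → MeasurableSet s := fun s hs =>
      MeasurableSpace.measurableSet_generateFrom hs.analyticSet
    obtain ⟨x₀⟩ := hXne
    -- a countable dense family
    set Z : Set (C(unitInterval, X) × C(unitInterval, X)) :=
      ⋃ (n : ℕ) (m : ℕ),
        (LipBall ((n : NNReal) + 1) x₀ (m : ℝ)) ×ˢ (LipBall ((n : NNReal) + 1) x₀ (m : ℝ))
      with hZ_def
    have hZsep : IsSeparable Z := by
      refine IsSeparable.iUnion fun n => IsSeparable.iUnion fun m => ?_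
      exact ((isCompact_lipBall _ _ _).prod (isCompact_lipBall _ _ _)).isSeparable
    obtain ⟨cset, hc_count, hc_sub⟩ := hZsep
    set y₀ : C(unitInterval, X) × C(unitInterval, X) :=
      (ContinuousMap.const _ x₀, ContinuousMap.const _ x₀) with hy₀_def
    obtain ⟨e, he⟩ := (hc_count.insert y₀).exists_eq_range (Set.insert_nonempty _ _)
    have hy₀range : y₀ ∈ Set.range e := by rw [← he]; exact Set.mem_insert _ _
    have hZclosure : Z ⊆ closure (Set.range e) := by
      refine subset_trans hc_sub (closure_mono ?_)
      rw [← he]; exact Set.subset_insert _ _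
    -- every fiber is in Z
    have hcover : ∀ (n : ℕ) (x : X), PairSet φ n x ⊆ Z := by
      intro n x p hp
      have h := pairSet_subset n x hp
      obtain ⟨m, hm⟩ := exists_nat_ge ((n : ℝ) + 1 + dist x x₀)
      refine Set.mem_iUnion.2 ⟨n, Set.mem_iUnion.2 ⟨m, ?_, ?_⟩⟩
      · obtain ⟨hl, hb⟩ := h.1
        refine ⟨hl, ?_⟩
        calc dist (p.1 0) x₀ ≤ dist (p.1 0) x + dist x x₀ := dist_triangle _ _ _
          _ ≤ (n : ℝ) + 1 + dist x x₀ := by linarith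
          _ ≤ (m : ℝ) := hm
      · obtain ⟨hl, hb⟩ := h.2
        refine ⟨hl, ?_⟩
        calc dist (p.2 0) x₀ ≤ dist (p.2 0) x + dist x x₀ := dist_triangle _ _ _
          _ ≤ (n : ℝ) + 1 + dist x x₀ := by linarith
          _ ≤ (m : ℝ) := hm
    -- the glued multifunction
    set Fbig : X → Set (C(unitInterval, X) × C(unitInterval, X)) := fun x =>
      if h : ∃ n, (PairSet φ n x).Nonempty then PairSet φ (Nat.find h) x else {y₀}
      with hFbig_def
    have hFne : ∀ x, (Fbig x).Nonempty := by
      intro x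
      simp only [hFbig_def]
      by_cases h : ∃ n, (PairSet φ n x).Nonempty
      · rw [dif_pos h]; exact Nat.find_spec h
      · rw [dif_neg h]; exact Set.singleton_nonempty _
    have hFcl : ∀ x, IsClosed (Fbig x) := by
      intro x
      simp only [hFbig_def]
      by_cases h : ∃ n, (PairSet φ n x).Nonempty
      · rw [dif_pos h]; exact isClosed_pairSet hφc _ x
      · rw [dif_neg h]; exact isClosed_singleton
    have hFdense : ∀ x, ∀ p ∈ Fbig x, ∀ ε : ℝ, 0 < ε → ∃ i, dist p (e i) < ε := by
      intro x p hp ε hε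
      simp only [hFbig_def] at hp
      by_cases h : ∃ n, (PairSet φ n x).Nonempty
      · rw [dif_pos h] at hp
        have hZ : p ∈ closure (Set.range e) := hZclosure (hcover _ x hp)
        obtain ⟨q, hq, hdq⟩ := Metric.mem_closure_iff.1 hZ ε hε
        obtain ⟨i, rfl⟩ := hq
        exact ⟨i, hdq⟩
      · rw [dif_neg h] at hp
        obtain ⟨i, hi⟩ := hy₀range
        refine ⟨i, ?_⟩
        rw [Set.mem_singleton_iff.1 hp, hi]
        simpa using hε
    have hFmeas : ∀ C : Set (C(unitInterval, X) × C(unitInterval, X)), IsClosed C →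
        MeasurableSet {x | (Fbig x ∩ C).Nonempty} := by
      intro C hC
      set A : ℕ → Set X := fun n => {x | (PairSet φ n x).Nonempty} with hA_def
      have hAclosed : ∀ n, IsClosed (A n) := by
        intro n
        have h := isClosed_pairHit (φ := φ) hφc n Set.univ isClosed_univ
        simpa [Set.inter_univ] using h
      set H : ℕ → Set X := fun n => {x | (PairSet φ n x ∩ C).Nonempty} with hH_def
      have hHclosed : ∀ n, IsClosed (H n) := fun n => isClosed_pairHit hφc n C hC
      have hkey : {x | (Fbig x ∩ C).Nonempty} =
          (⋃ n, ((A n ∩ H n) \ ⋃ (m : ℕ), ⋃ (_ : m < n), A m)) ∪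
          ((⋂ n, (A n)ᶜ) ∩ {x | y₀ ∈ C}) := by
        ext x
        simp only [Set.mem_setOf_eq, Set.mem_union, Set.mem_iUnion, Set.mem_diff,
          Set.mem_inter_iff, Set.mem_iInter, Set.mem_compl_iff]
        simp only [hFbig_def]
        by_cases h : ∃ n, (PairSet φ n x).Nonempty
        · rw [dif_pos h]
          constructor
          · intro hne'
            refine Or.inl ⟨Nat.find h, ⟨Nat.find_spec h, hne'⟩, ?_⟩
            intro hm
            obtain ⟨m, hm1, hm2⟩ := hm
            exact Nat.find_min h hm1 hm2
          · rintro (⟨n, ⟨hAn, hHn⟩, hmin⟩ | ⟨hall, -⟩)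
            · have hfind : Nat.find h = n := by
                rcases lt_trichotomy (Nat.find h) n with hlt | heq | hgt
                · exact absurd ⟨Nat.find h, hlt, Nat.find_spec h⟩ hmin
                · exact heq
                · exact absurd hAn (Nat.find_min h hgt)
              rw [hfind]; exact hHn
            · exact absurd (Nat.find_spec h) (hall (Nat.find h))
        · rw [dif_neg h]
          constructor
          · rintro ⟨p, hp, hpC⟩
            rw [Set.mem_singleton_iff.1 hp] at hpC
            exact Or.inr ⟨fun n hn => h ⟨n, hn⟩, hpC⟩
          · rintro (⟨n, ⟨hAn, -⟩, -⟩ | ⟨-, hy⟩)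
            · exact absurd ⟨n, hAn⟩ h
            · exact ⟨y₀, Set.mem_singleton _, hy⟩
      rw [hkey]
      refine MeasurableSet.union ?_ ?_
      · refine MeasurableSet.iUnion fun n => MeasurableSet.diff ?_ ?_
        · exact (hclosed_meas _ (hAclosed n)).inter (hclosed_meas _ (hHclosed n))
        · exact MeasurableSet.iUnion fun m => MeasurableSet.iUnion fun _ =>
            hclosed_meas _ (hAclosed m)
      · refine MeasurableSet.inter (MeasurableSet.iInter fun n =>
          (hclosed_meas _ (hAclosed n)).compl) ?_
        by_cases hy : y₀ ∈ C
        · have : {x : X | y₀ ∈ C} = Set.univ := by ext x; simp [hy]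
          rw [this]; exact MeasurableSet.univ
        · have : {x : X | y₀ ∈ C} = ∅ := by ext x; simp [hy]
          rw [this]; exact MeasurableSet.empty
    obtain ⟨u0, hu0meas, hu0mem⟩ := krn_selection Fbig e hFne hFcl hFdense hFmeas
    refine ⟨u0, hu0meas, ?_⟩
    intro x hx
    have hx' : ∃ n, (PairSet φ n x).Nonempty := exists_pairSet hgeod hφ hx
    have hmem := hu0mem x
    simp only [hFbig_def] at hmem
    rw [dif_pos hx'] at hmem
    set n := Nat.find hx' with hn_def
    obtain ⟨hg1, hg2, hΓ1, hΓ2, hxΓ, hφeq, hsep, hlo1, hlo2, -, -, -, -⟩ := hmem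
    have hpos : (0 : ℝ) < ((n : ℝ) + 1)⁻¹ := by positivity
    refine ⟨hg1, hg2, hΓ1, hΓ2, ?_, ?_, hxΓ, ?_, hφeq⟩
    · intro hEq
      rw [hEq, dist_self] at hlo1
      linarith
    · intro hEq
      rw [hEq, dist_self] at hlo2
      linarith
    · intro s hmemR
      have heq := hφeq s
      have hd := hsep s
      rcases hmemR with hR | hR
      · have : φ ((u0 x).1 s) - φ ((u0 x).2 s) = dist ((u0 x).1 s) ((u0 x).2 s) := hR
        rw [heq] at this
        simp only [sub_self] at this
        rw [← this] at hd
        linarith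
      · have : φ ((u0 x).2 s) - φ ((u0 x).1 s) = dist ((u0 x).2 s) ((u0 x).1 s) := hR
        rw [heq] at this
        simp only [sub_self] at this
        rw [dist_comm ((u0 x).1 s) ((u0 x).2 s), ← this] at hd
        linarith

end Main
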